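/- Fix τ ∈ (0,1) and define the check function ρ_τ(u) = u(τ − 1{u < 0}). Let u₁,…,u_n and a₁,…,a_n be real numbers, and let t* ∈ ℝ be a minimizer of the convex function t ↦ Σ_{i=1}^n ρ_τ(u_i − a_i t). Then the estimating-equation residual satisfies | Σ_{i=1}^n (1{u_i ≤ a_i t*} − τ) a_i | ≤ Σ_{i=1}^n 1{u_i = a_i t*} · |a_i|. In particular, if at most one index i satisfies u_i = a_i t*, then | Σ_{i=1}^n (1{u_i ≤ a_i t*} − τ) a_i | ≤ max_{i=1,…,n} |a_i|. -/
import Mathlib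


open Finset in
/-- The quantile-regression check function `ρ_τ(u) = u (τ − 1{u < 0})`. -/
noncomputable def checkFn (τ u : ℝ) : ℝ := u * (τ - if u < 0 then 1 else 0)

/-- One-step exact expansion of the check function when the residual indicator
is stabilized: for `|a| ε < |r|` (whenever `r ≠ 0`),
`ρ_τ(r - a ε) - ρ_τ(r) = ε (1{r < 0 ∨ (r = 0 ∧ a > 0)} - τ) a`. -/
lemma checkFn_diff (τ ε r a : ℝ) (hε : 0 < ε) (hst : r ≠ 0 → |a| * ε < |r|) :
    checkFn τ (r - a * ε) - checkFn τ r
      = ε * ((if r < 0 ∨ (r = 0 ∧ 0 < a) then (1:ℝ) else 0) - τ) * a := by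
  unfold checkFn
  rcases lt_trichotomy r 0 with hr | hr | hr
  · have h1 : |a| * ε < -r := by have := hst hr.ne; rwa [abs_of_neg hr] at this
    have h2 : r - a * ε < 0 := by nlinarith [neg_abs_le a, le_abs_self a]
    rw [if_pos h2, if_pos hr, if_pos (Or.inl hr)]; ring
  · subst hr
    rcases lt_trichotomy a 0 with ha | ha | ha
    · have h2 : ¬ ((0:ℝ) - a * ε < 0) := by nlinarith
      rw [if_neg h2, if_neg (lt_irrefl 0),
        if_neg (by rintro (h' | ⟨-, h'⟩); exacts [lt_irrefl _ h', absurd h' (asymm ha)])]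
      ring
    · subst ha; simp
    · have h2 : (0:ℝ) - a * ε < 0 := by nlinarith
      rw [if_pos h2, if_neg (lt_irrefl 0), if_pos (Or.inr ⟨rfl, ha⟩)]
      ring
  · have h1 : |a| * ε < r := by have := hst hr.ne'; rwa [abs_of_pos hr] at this
    have h2 : ¬ (r - a * ε < 0) := by nlinarith [neg_abs_le a, le_abs_self a]
    rw [if_neg h2, if_neg (asymm hr),
      if_neg (by rintro (h' | ⟨h', -⟩); exacts [asymm hr h', absurd h' hr.ne'])]
    ring

/-- Per-term comparison (upper direction). -/
lemma pt_le (τ r a : ℝ) :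
    ((if r ≤ 0 then (1:ℝ) else 0) - τ) * a ≤
      ((if r < 0 ∨ (r = 0 ∧ 0 < -a) then (1:ℝ) else 0) - τ) * a
        + (if r = 0 then (1:ℝ) else 0) * |a| := by
  rcases lt_trichotomy r 0 with h | h | h
  · rw [if_pos h.le, if_pos (Or.inl h), if_neg h.ne]
    linarith [abs_nonneg a]
  · subst h
    by_cases h' : 0 < -a
    · rw [if_pos le_rfl, if_pos (Or.inr ⟨rfl, h'⟩), if_pos rfl, abs_of_neg (by linarith)]
      linarith
    · rw [if_pos le_rfl,
        if_neg (by rintro (h'' | ⟨-, h''⟩); exacts [lt_irrefl _ h'', h' h'']),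
        if_pos rfl, abs_of_nonneg (by linarith)]
      linarith
  · rw [if_neg (not_le.mpr h),
      if_neg (by rintro (h'' | ⟨h'', -⟩); exacts [asymm h h'', absurd h'' h.ne']),
      if_neg h.ne']
    linarith [abs_nonneg a]

/-- Per-term comparison (lower direction). -/
lemma pt_ge (τ r a : ℝ) :
    ((if r < 0 ∨ (r = 0 ∧ 0 < a) then (1:ℝ) else 0) - τ) * a
        - (if r = 0 then (1:ℝ) else 0) * |a|
      ≤ ((if r ≤ 0 then (1:ℝ) else 0) - τ) * a := by
  rcases lt_trichotomy r 0 with h | h | h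
  · rw [if_pos h.le, if_pos (Or.inl h), if_neg h.ne]
    linarith [abs_nonneg a]
  · subst h
    by_cases h' : 0 < a
    · rw [if_pos le_rfl, if_pos (Or.inr ⟨rfl, h'⟩), if_pos rfl, abs_of_pos h']
      linarith
    · rw [if_pos le_rfl,
        if_neg (by rintro (h'' | ⟨-, h''⟩); exacts [lt_irrefl _ h'', h' h'']),
        if_pos rfl, abs_of_nonpos (by linarith)]
      linarith
  · rw [if_neg (not_le.mpr h),
      if_neg (by rintro (h'' | ⟨h'', -⟩); exacts [asymm h h'', absurd h'' h.ne']),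
      if_neg h.ne']
    linarith [abs_nonneg a]

/-- deterministic subgradient inequality at the heart of Lemma
`sample_BR` of the paper. If `t*` minimizes `t ↦ Σ ρ_τ(uᵢ − aᵢ t)`, then the
estimating-equation residual is bounded by the contribution of observations with
exactly zero residual; in particular, if at most one observation has zero residual,
the bound is `max᷉ᵢ |aᵢ|` (taken as a supremum). -/
theorem stmt10 {n : ℕ} (τ : ℝ) (hτ : τ ∈ Set.Ioo (0 : ℝ) 1)
    (u a : Fin n → ℝ) (tstar : ℝ)
    (hmin : ∀ t : ℝ,
      (∑ i : Fin n, checkFn τ (u i - a i * tstar)) ≤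
        ∑ i : Fin n, checkFn τ (u i - a i * t)) :
    |∑ i : Fin n, ((if u i ≤ a i * tstar then (1 : ℝ) else 0) - τ) * a i| ≤
      (∑ i : Fin n, (if u i = a i * tstar then (1 : ℝ) else 0) * |a i|) ∧
    ((∀ i j : Fin n, u i = a i * tstar → u j = a j * tstar → i = j) →
      |∑ i : Fin n, ((if u i ≤ a i * tstar then (1 : ℝ) else 0) - τ) * a i| ≤
        ⨆ i : Fin n, |a i|) := by
  -- rewrite conditions into residual form
  have e1 : (∑ i : Fin n, ((if u i ≤ a i * tstar then (1 : ℝ) else 0) - τ) * a i)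
      = ∑ i : Fin n, ((if u i - a i * tstar ≤ 0 then (1 : ℝ) else 0) - τ) * a i :=
    Finset.sum_congr rfl fun i _ => by simp [sub_nonpos]
  have e2 : (∑ i : Fin n, (if u i = a i * tstar then (1 : ℝ) else 0) * |a i|)
      = ∑ i : Fin n, (if u i - a i * tstar = 0 then (1 : ℝ) else 0) * |a i| :=
    Finset.sum_congr rfl fun i _ => by simp [sub_eq_zero]
  rw [e1, e2]
  obtain _ | m := n
  · constructor
    · simp
    · intro _; simp [Real.iSup_of_isEmpty]
  -- choose a stabilization radius ε
  have hne : (Finset.univ : Finset (Fin (m+1))).Nonempty := ⟨0, Finset.mem_univ 0⟩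
  set g : Fin (m+1) → ℝ := fun i =>
    if u i - a i * tstar = 0 then 1 else |u i - a i * tstar| / (|a i| + 1) with hg
  have hgpos : ∀ i, 0 < g i := by
    intro i
    simp only [hg]
    split_ifs with h
    · norm_num
    · have := abs_pos.mpr h
      positivity
  set ε : ℝ := Finset.univ.inf' hne g with hεdef
  have hεpos : 0 < ε := (Finset.lt_inf'_iff hne).mpr fun i _ => hgpos i
  have hstab : ∀ i, u i - a i * tstar ≠ 0 → |a i| * ε < |u i - a i * tstar| := by
    intro i hi
    have h1 : ε ≤ g i := Finset.inf'_le g (Finset.mem_univ i)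
    have hgi : g i = |u i - a i * tstar| / (|a i| + 1) := if_neg hi
    have hra : 0 < |u i - a i * tstar| := abs_pos.mpr hi
    have ha1 : (0:ℝ) < |a i| + 1 := by positivity
    rw [hgi] at h1
    have hd : 0 < |u i - a i * tstar| / (|a i| + 1) := by positivity
    have hcanc : (|u i - a i * tstar| / (|a i| + 1)) * (|a i| + 1) = |u i - a i * tstar| :=
      div_mul_cancel₀ _ ha1.ne'
    nlinarith [abs_nonneg (a i)]
  -- right directional derivative inequality
  have key1 : 0 ≤ ∑ i : Fin (m+1),
      ((if u i - a i * tstar < 0 ∨ (u i - a i * tstar = 0 ∧ 0 < a i) then (1:ℝ) else 0) - τ)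
        * a i := by
    have hm := hmin (tstar + ε)
    have hsum : ∑ i : Fin (m+1), checkFn τ (u i - a i * (tstar + ε))
        = ∑ i : Fin (m+1), (checkFn τ (u i - a i * tstar)
            + ε * ((if u i - a i * tstar < 0 ∨ (u i - a i * tstar = 0 ∧ 0 < a i)
                then (1:ℝ) else 0) - τ) * a i) := by
      refine Finset.sum_congr rfl fun i _ => ?_
      have hd := checkFn_diff τ ε (u i - a i * tstar) (a i) hεpos (hstab i)
      have hr : u i - a i * (tstar + ε) = (u i - a i * tstar) - a i * ε := by ring
      rw [hr]; linarith
    rw [hsum, Finset.sum_add_distrib] at hm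
    have h0 : 0 ≤ ε * ∑ i : Fin (m+1),
        ((if u i - a i * tstar < 0 ∨ (u i - a i * tstar = 0 ∧ 0 < a i) then (1:ℝ) else 0) - τ)
          * a i := by
      rw [Finset.mul_sum]
      calc (0:ℝ) ≤ ∑ i : Fin (m+1), ε * ((if u i - a i * tstar < 0 ∨
            (u i - a i * tstar = 0 ∧ 0 < a i) then (1:ℝ) else 0) - τ) * a i := by linarith
        _ = _ := Finset.sum_congr rfl fun i _ => by ring
    nlinarith
  -- left directional derivative inequality
  have key2 : (∑ i : Fin (m+1),
      ((if u i - a i * tstar < 0 ∨ (u i - a i * tstar = 0 ∧ 0 < -a i) then (1:ℝ) else 0) - τ)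
        * a i) ≤ 0 := by
    have hm := hmin (tstar - ε)
    have hsum : ∑ i : Fin (m+1), checkFn τ (u i - a i * (tstar - ε))
        = ∑ i : Fin (m+1), (checkFn τ (u i - a i * tstar)
            - ε * ((if u i - a i * tstar < 0 ∨ (u i - a i * tstar = 0 ∧ 0 < -a i)
                then (1:ℝ) else 0) - τ) * a i) := by
      refine Finset.sum_congr rfl fun i _ => ?_
      have hst' : u i - a i * tstar ≠ 0 → |(-(a i))| * ε < |u i - a i * tstar| := by
        intro h; rw [abs_neg]; exact hstab i h
      have hd := checkFn_diff τ ε (u i - a i * tstar) (-(a i)) hεpos hst'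
      have hr : u i - a i * (tstar - ε) = (u i - a i * tstar) - (-(a i)) * ε := by ring
      rw [hr]; linarith [hd]
    rw [hsum, Finset.sum_sub_distrib] at hm
    have h0 : 0 ≤ -(ε * ∑ i : Fin (m+1),
        ((if u i - a i * tstar < 0 ∨ (u i - a i * tstar = 0 ∧ 0 < -a i) then (1:ℝ) else 0) - τ)
          * a i) := by
      rw [Finset.mul_sum]
      calc (0:ℝ) ≤ -∑ i : Fin (m+1), ε * ((if u i - a i * tstar < 0 ∨
            (u i - a i * tstar = 0 ∧ 0 < -a i) then (1:ℝ) else 0) - τ) * a i := by linarith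
        _ = _ := by rw [neg_inj]; exact Finset.sum_congr rfl fun i _ => by ring
    nlinarith
  -- combine into the absolute-value bound
  have hub : (∑ i : Fin (m+1), ((if u i - a i * tstar ≤ 0 then (1:ℝ) else 0) - τ) * a i)
      ≤ ∑ i : Fin (m+1), (if u i - a i * tstar = 0 then (1:ℝ) else 0) * |a i| := by
    have h := Finset.sum_le_sum (f := fun i : Fin (m+1) =>
        ((if u i - a i * tstar ≤ 0 then (1:ℝ) else 0) - τ) * a i)
      (fun i (_ : i ∈ Finset.univ) => pt_le τ (u i - a i * tstar) (a i))
    rw [Finset.sum_add_distrib] at h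
    linarith
  have hlb : -(∑ i : Fin (m+1), (if u i - a i * tstar = 0 then (1:ℝ) else 0) * |a i|)
      ≤ ∑ i : Fin (m+1), ((if u i - a i * tstar ≤ 0 then (1:ℝ) else 0) - τ) * a i := by
    have h := Finset.sum_le_sum (g := fun i : Fin (m+1) =>
        ((if u i - a i * tstar ≤ 0 then (1:ℝ) else 0) - τ) * a i)
      (fun i (_ : i ∈ Finset.univ) => pt_ge τ (u i - a i * tstar) (a i))
    rw [Finset.sum_sub_distrib] at h
    linarith
  have habs : |∑ i : Fin (m+1), ((if u i - a i * tstar ≤ 0 then (1:ℝ) else 0) - τ) * a i|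
      ≤ ∑ i : Fin (m+1), (if u i - a i * tstar = 0 then (1:ℝ) else 0) * |a i| :=
    abs_le.mpr ⟨hlb, hub⟩
  refine ⟨habs, fun huniq => le_trans habs ?_⟩
  have hbdd : BddAbove (Set.range fun i : Fin (m+1) => |a i|) :=
    Set.Finite.bddAbove (Set.finite_range _)
  by_cases hex : ∃ i : Fin (m+1), u i - a i * tstar = 0
  · obtain ⟨i0, hi0⟩ := hex
    have hsum : (∑ i : Fin (m+1), (if u i - a i * tstar = 0 then (1:ℝ) else 0) * |a i|)
        = |a i0| := by
      rw [Finset.sum_eq_single i0]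
      · rw [if_pos hi0, one_mul]
      · intro j _ hj
        rw [if_neg, zero_mul]
        intro hj0
        exact hj (huniq j i0 (sub_eq_zero.mp hj0) (sub_eq_zero.mp hi0))
      · intro h; exact absurd (Finset.mem_univ i0) h
    rw [hsum]
    exact le_ciSup hbdd i0
  · have hsum : (∑ i : Fin (m+1), (if u i - a i * tstar = 0 then (1:ℝ) else 0) * |a i|)
        = 0 := Finset.sum_eq_zero fun i _ => by
      rw [if_neg (fun h => hex ⟨i, h⟩), zero_mul]
    rw [hsum]
    exact le_trans (abs_nonneg (a 0)) (le_ciSup hbdd 0)
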